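/- Let 𝒞 be a weakly connected collection of cells over the field ℚ with |𝒞| ≤ 3 (rank 1, 2, or 3). Then the adjacent 2-minor ideal I_adj(𝒞) is a radical ideal. -/

import Mathlib

/-!
Orient every cell, i.e. decide which of its two diagonals carries the leading monomial of its
adjacent 2-minor, so that the leading monomials of distinct cells are coprime; with at most three
cells this is always possible. A weight on `ℤ²` whose mixed second difference over each cell is
`+1` or `-1` according to its orientation, with ties broken by any monomial order, gives a
monomial order in which these are the leading monomials. Coprime leading monomials make the minors
a Gröbner basis (Buchberger's first criterion: the rewriting `X ^ lead ↦ X ^ tail` is confluent),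
and then the ideal is radical because the leading monomials are squarefree: if `f ^ n` lies in
the ideal, so does `g ^ n` for the normal form `g` of `f`, and the leading monomial `n • in(g)` of
`g ^ n` is divisible by a squarefree leading monomial only if `in(g)` is, which a normal form
excludes unless `g = 0`.
-/

open MvPolynomial

/-- The vertex set of the cell with lower-left corner `a`. -/
def cellVerts (a : ℤ × ℤ) : Finset (ℤ × ℤ) :=
  {a, a + (1, 0), a + (0, 1), a + (1, 1)}

/-- The edges of the cell with lower-left corner `a`, recorded as ordered pairs
of their two endpoints: `{a,c}`, `{c,b}`, `{b,d}`, `{a,d}` where `b = a+(1,1)`,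
`c = a+(0,1)`, `d = a+(1,0)`. -/
def cellEdges (a : ℤ × ℤ) : Finset ((ℤ × ℤ) × (ℤ × ℤ)) :=
  {(a, a + (0, 1)), (a + (0, 1), a + (1, 1)), (a + (1, 1), a + (1, 0)), (a, a + (1, 0))}

/-- The vertex set of a collection of cells; cells are recorded by their
lower-left corners. -/
def verts (C : Finset (ℤ × ℤ)) : Finset (ℤ × ℤ) :=
  C.biUnion cellVerts

lemma mem_verts {C : Finset (ℤ × ℤ)} {a v : ℤ × ℤ} (ha : a ∈ C)
    (hv : v ∈ cellVerts a) : v ∈ verts C :=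
  Finset.mem_biUnion.mpr ⟨a, ha, hv⟩

lemma corner_mem00 (a : ℤ × ℤ) : a ∈ cellVerts a := by simp [cellVerts]
lemma corner_mem10 (a : ℤ × ℤ) : a + (1, 0) ∈ cellVerts a := by simp [cellVerts]
lemma corner_mem01 (a : ℤ × ℤ) : a + (0, 1) ∈ cellVerts a := by simp [cellVerts]
lemma corner_mem11 (a : ℤ × ℤ) : a + (1, 1) ∈ cellVerts a := by simp [cellVerts]

/-- The adjacent 2-minor ideal `I_adj(𝒞)` of a collection of cells, inside the
polynomial ring `S_𝒞 = K[x_v : v ∈ V(𝒞)]`. -/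
noncomputable def adjIdeal (K : Type*) [Field K] (C : Finset (ℤ × ℤ)) :
    Ideal (MvPolynomial {v // v ∈ verts C} K) :=
  Ideal.span {f | ∃ a, ∃ ha : a ∈ C,
    f = X ⟨a, mem_verts ha (corner_mem00 a)⟩ *
          X ⟨a + (1, 1), mem_verts ha (corner_mem11 a)⟩ -
        X ⟨a + (0, 1), mem_verts ha (corner_mem01 a)⟩ *
          X ⟨a + (1, 0), mem_verts ha (corner_mem10 a)⟩}

/-- The vector `v_C = e_a + e_b - e_c - e_d ∈ ℤ^{V(𝒞)}` attached to the cell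
with lower-left corner `a` (so `b = a+(1,1)`, `c = a+(0,1)`, `d = a+(1,0)`). -/
def cellVec (C : Finset (ℤ × ℤ)) (a : ℤ × ℤ) : {v // v ∈ verts C} → ℤ :=
  fun w => ((if w.1 = a then 1 else 0) + (if w.1 = a + (1, 1) then 1 else 0)
    - (if w.1 = a + (0, 1) then 1 else 0)) - (if w.1 = a + (1, 0) then 1 else 0)

/-- The lattice `Λ_𝒟 ⊆ ℤ^{V(𝒞)}` generated by the vectors `v_C`, `C ∈ 𝒟`,
for a subcollection `𝒟` of `𝒞`. -/
def cellLattice (C : Finset (ℤ × ℤ)) (D : Set (ℤ × ℤ)) :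
    AddSubgroup ({v // v ∈ verts C} → ℤ) :=
  AddSubgroup.closure {g | ∃ a ∈ D, g = cellVec C a}

/-- The lattice ideal `L_𝒟 ⊆ S_𝒞` of a subcollection `𝒟` of `𝒞`. -/
noncomputable def latticeIdeal (K : Type*) [Field K] (C : Finset (ℤ × ℤ))
    (D : Set (ℤ × ℤ)) : Ideal (MvPolynomial {v // v ∈ verts C} K) :=
  Ideal.span {f | ∃ e ∈ cellLattice C D,
    f = (∏ w, X w ^ (e w).toNat) - ∏ w, X w ^ (-(e w)).toNat}

/-- `W ⊆ V(𝒞)` is admissible: for each cell `C ∈ 𝒞`, either `W ∩ C = ∅` or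
`W ∩ C` contains an edge of `C`. -/
def Admissible (C : Finset (ℤ × ℤ)) (W : Set (ℤ × ℤ)) : Prop :=
  W ⊆ ↑(verts C) ∧ ∀ a ∈ C, (∀ v ∈ cellVerts a, v ∉ W) ∨
    ∃ e ∈ cellEdges a, e.1 ∈ W ∧ e.2 ∈ W

/-- The subcollection `𝒞_W` of cells of `𝒞` disjoint from `W`. -/
def subcollW (C : Finset (ℤ × ℤ)) (W : Set (ℤ × ℤ)) : Set (ℤ × ℤ) :=
  {a | a ∈ C ∧ ∀ v ∈ cellVerts a, v ∉ W}

/-- The ideal `P_W(𝒞) = (x_w : w ∈ W) + L_{𝒞_W}`. -/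
noncomputable def PW (K : Type*) [Field K] (C : Finset (ℤ × ℤ))
    (W : Set (ℤ × ℤ)) : Ideal (MvPolynomial {v // v ∈ verts C} K) :=
  Ideal.span {f | ∃ v : {v // v ∈ verts C}, v.1 ∈ W ∧ f = X v} +
    latticeIdeal K C (subcollW C W)

/-- The height of an ideal: the infimum of `Order.height 𝔭` over the prime
ideals `𝔭` containing it (equivalently, over its minimal primes); for a prime
ideal this is just its height. -/
noncomputable def idealHeight {R : Type*} [CommRing R] (I : Ideal R) : ℕ∞ :=
  ⨅ p ∈ {p : PrimeSpectrum R | I ≤ p.asIdeal}, Order.height p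

/-- A collection of cells is weakly connected if any two of its cells are
joined by a sequence of cells of the collection in which consecutive cells
share at least one vertex. -/
def WeaklyConnected (C : Finset (ℤ × ℤ)) : Prop :=
  ∀ a ∈ C, ∀ b ∈ C, Relation.ReflTransGen
    (fun p q => p ∈ C ∧ q ∈ C ∧ ((cellVerts p ∩ cellVerts q).Nonempty)) a b

/-- `𝒞` contains a square tetromino. -/
def HasSquareTetromino (C : Finset (ℤ × ℤ)) : Prop :=
  ∃ a : ℤ × ℤ, a ∈ C ∧ a + (1, 0) ∈ C ∧ a + (0, 1) ∈ C ∧ a + (1, 1) ∈ C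

/-- `𝒞` contains an X-pentomino. -/
def HasXPentomino (C : Finset (ℤ × ℤ)) : Prop :=
  ∃ a : ℤ × ℤ, a ∈ C ∧ a + (1, 0) ∈ C ∧ a - (1, 0) ∈ C ∧
    a + (0, 1) ∈ C ∧ a - (0, 1) ∈ C

/-- Row convexity of a collection of cells. -/
def RowConvex (C : Finset (ℤ × ℤ)) : Prop :=
  ∀ a ∈ C, ∀ b ∈ C, a.2 = b.2 → ∀ r : ℤ, a.1 ≤ r → r ≤ b.1 → (r, a.2) ∈ C

/-- Column convexity of a collection of cells. -/
def ColConvex (C : Finset (ℤ × ℤ)) : Prop :=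
  ∀ a ∈ C, ∀ b ∈ C, a.1 = b.1 → ∀ s : ℤ, a.2 ≤ s → s ≤ b.2 → (a.1, s) ∈ C


open scoped MonomialOrder

theorem Finsupp.le_of_le_nsmul_of_le_one {σ : Type*} {U u : σ →₀ ℕ} (hU : ∀ x, U x ≤ 1) {n : ℕ}
    (h : U ≤ n • u) : U ≤ u := by
  intro x
  have hx := h x
  rw [Finsupp.smul_apply, smul_eq_mul] at hx
  rcases Nat.eq_zero_or_pos (u x) with h0 | hpos
  · rw [h0, mul_zero] at hx
    omega
  · exact (hU x).trans hpos

theorem Finsupp.single_add_single_apply_le_one {σ : Type*} {p q : σ} (hpq : p ≠ q) (x : σ) :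
    (Finsupp.single p 1 + Finsupp.single q 1 : σ →₀ ℕ) x ≤ 1 := by
  classical
  simp only [Finsupp.add_apply, Finsupp.single_apply]
  split_ifs <;> simp_all

theorem Finsupp.eq_or_eq_of_mem_support_single_add_single {σ : Type*} {p q x : σ}
    (hx : x ∈ (Finsupp.single p 1 + Finsupp.single q 1 : σ →₀ ℕ).support) : x = p ∨ x = q := by
  classical
  simpa [eq_comm] using Finsupp.support_add hx

theorem MvPolynomial.monomial_single_add_single {σ R : Type*} [CommSemiring R] (p q : σ) :
    monomial (Finsupp.single p 1 + Finsupp.single q 1) (1 : R) = X p * X q := by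
  rw [X, X, monomial_mul, one_mul]

theorem Ideal.span_range_eq_of_eq_or_eq_neg {R ι : Type*} [CommRing R] {f g : ι → R}
    (h : ∀ i, g i = f i ∨ g i = -f i) : Ideal.span (Set.range g) = Ideal.span (Set.range f) := by
  simp only [Ideal.span_range_eq_iSup]
  congr! 2 with i
  rcases h i with h | h <;> rw [h]
  exact Ideal.span_singleton_neg _

namespace MonomialOrder

universe u v

section WeightThen

variable {σ : Type u}

noncomputable def weightThenEmbedding (w : (σ →₀ ℕ) →+ ℕ) (m : MonomialOrder.{u, v} σ) :
    (σ →₀ ℕ) →+ Lex (ℕ × m.syn) :=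
  (toLexAddEquiv _).toAddMonoidHom.comp (w.prod m.toSyn.toAddMonoidHom)

/-- As `toSyn` has to be an additive equivalence, `syn` is the image of the embedding. -/
noncomputable def weightThen (w : (σ →₀ ℕ) →+ ℕ) (m : MonomialOrder.{u, v} σ) :
    MonomialOrder.{u, v} σ where
  syn := AddMonoidHom.mrange (weightThenEmbedding w m)
  addCommMonoidSyn := inferInstance
  linearOrderSyn := inferInstance
  isOrderedAddMonoid_syn := inferInstance
  wellFoundedLT_syn := inferInstance
  toSyn := AddEquiv.ofBijective (weightThenEmbedding w m).mrangeRestrict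
      ⟨fun d e h => m.toSyn.injective (congrArg (fun x => (ofLex x.1).2) h),
        (weightThenEmbedding w m).mrangeRestrict_surjective⟩
  toSyn_monotone d e h := by
    obtain ⟨c, rfl⟩ := exists_add_of_le h
    refine Prod.Lex.toLex_mono ⟨?_, m.toSyn_monotone h⟩
    show w d ≤ w (d + c)
    rw [map_add]
    exact Nat.le_add_right _ _

theorem lt_weightThen_of_lt {w : (σ →₀ ℕ) →+ ℕ} {m : MonomialOrder.{u, v} σ} {d e : σ →₀ ℕ}
    (h : w d < w e) : d ≺[weightThen w m] e :=
  Prod.Lex.toLex_lt_toLex.mpr (Or.inl h)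

end WeightThen

theorem nonempty (σ : Type u) : Nonempty (MonomialOrder.{u, u} σ) := by
  let : LinearOrder σ := by classical exact linearOrderOfSTO WellOrderingRel
  have : WellFoundedLT σ := ⟨WellOrderingRel.isWellOrder.wf⟩
  -- `lex` needs `WellFoundedGT`, hence the order dual of a well-order.
  exact ⟨@MonomialOrder.lex σᵒᵈ _ _⟩

open MvPolynomial

variable {σ : Type*} (m : MonomialOrder σ) (ι : Type*)

structure CoprimeBinomials where
  lead : ι → σ →₀ ℕ
  tail : ι → σ →₀ ℕ
  tail_lt_lead : ∀ i, tail i ≺[m] lead i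
  disjoint_lead : Pairwise fun i j => Disjoint (lead i).support (lead j).support

namespace CoprimeBinomials

variable {m ι} (B : m.CoprimeBinomials ι)

theorem add_tail_lt_add_lead (e : σ →₀ ℕ) (i : ι) : e + B.tail i ≺[m] e + B.lead i := by
  simp only [map_add]
  exact add_lt_add_right (B.tail_lt_lead i) _

theorem sub_lead_add_tail_lt {d : σ →₀ ℕ} {i : ι} (h : B.lead i ≤ d) :
    d - B.lead i + B.tail i ≺[m] d := by
  conv_rhs => rw [← tsub_add_cancel_of_le h]
  exact B.add_tail_lt_add_lead _ i

theorem lead_le_of_lead_le_add_lead {i j : ι} (hij : i ≠ j) {e : σ →₀ ℕ}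
    (h : B.lead j ≤ e + B.lead i) : B.lead j ≤ e := by
  intro x
  by_cases hx : x ∈ (B.lead j).support
  · have hi : B.lead i x = 0 :=
      Finsupp.notMem_support_iff.mp (Finset.disjoint_right.mp (B.disjoint_lead hij) hx)
    simpa [hi] using h x
  · simp [Finsupp.notMem_support_iff.mp hx]

open scoped Classical in
noncomputable def normalForm (d : σ →₀ ℕ) : σ →₀ ℕ :=
  if h : ∃ i, B.lead i ≤ d then normalForm (d - B.lead h.choose + B.tail h.choose) else d
termination_by WellFounded.wrap wellFounded_lt (m.toSyn d)
decreasing_by exact B.sub_lead_add_tail_lt h.choose_spec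

theorem normalForm_eq_self {d : σ →₀ ℕ} (h : ∀ i, ¬ B.lead i ≤ d) : B.normalForm d = d := by
  rw [normalForm, dif_neg (not_exists.mpr h)]

theorem not_lead_le_normalForm (d : σ →₀ ℕ) (i : ι) : ¬ B.lead i ≤ B.normalForm d := by
  rw [normalForm]
  split_ifs with h
  · exact not_lead_le_normalForm _ i
  · exact fun hi => h ⟨i, hi⟩
termination_by WellFounded.wrap wellFounded_lt (m.toSyn d)
decreasing_by exact B.sub_lead_add_tail_lt h.choose_spec

theorem normalForm_le (d : σ →₀ ℕ) : B.normalForm d ≼[m] d := by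
  rw [normalForm]
  split_ifs with h
  · exact (normalForm_le _).trans (B.sub_lead_add_tail_lt h.choose_spec).le
  · exact le_rfl
termination_by WellFounded.wrap wellFounded_lt (m.toSyn d)
decreasing_by exact B.sub_lead_add_tail_lt h.choose_spec

/-- Any two reductions of `e + lead i` meet again: a reduction by `lead j` with `j ≠ i` leaves
`lead i` in place, since coprime leading monomials have no overlap. -/
theorem normalForm_add_lead (e : σ →₀ ℕ) (i : ι) :
    B.normalForm (e + B.lead i) = B.normalForm (e + B.tail i) := by
  have hex : ∃ j, B.lead j ≤ e + B.lead i := ⟨i, le_add_self⟩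
  conv_lhs => rw [normalForm, dif_pos hex]
  obtain ⟨j, hj, hje⟩ : ∃ j, hex.choose = j ∧ B.lead j ≤ e + B.lead i :=
    ⟨_, rfl, hex.choose_spec⟩
  rw [hj]
  by_cases hij : i = j
  · rw [← hij, add_tsub_cancel_right]
  obtain ⟨f, hf⟩ := exists_add_of_le (B.lead_le_of_lead_le_add_lead hij hje)
  rw [hf, show B.lead j + f + B.lead i - B.lead j + B.tail j = f + B.tail j + B.lead i by
      rw [add_assoc, add_tsub_cancel_left]; abel,
    normalForm_add_lead (f + B.tail j) i,
    show B.lead j + f + B.tail i = f + B.tail i + B.lead j by abel,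
    normalForm_add_lead (f + B.tail i) j]
  congr 1
  abel
termination_by WellFounded.wrap wellFounded_lt (m.toSyn (e + B.lead i))
decreasing_by
  all_goals
    change m.toSyn _ < m.toSyn _
    rw [hf]
  · simpa only [add_comm, add_left_comm, add_assoc] using B.add_tail_lt_add_lead (f + B.lead i) j
  · simpa only [add_comm, add_left_comm, add_assoc] using B.add_tail_lt_add_lead (f + B.lead j) i

variable (R : Type*) [CommRing R]

noncomputable def binomial (i : ι) : MvPolynomial σ R :=
  monomial (B.lead i) 1 - monomial (B.tail i) 1

noncomputable def ideal : Ideal (MvPolynomial σ R) :=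
  Ideal.span (Set.range (B.binomial R))

noncomputable def normalize : MvPolynomial σ R →ₗ[R] MvPolynomial σ R :=
  AddMonoidAlgebra.mapDomainLinearMap R R B.normalForm

variable {R}

theorem normalize_monomial (d : σ →₀ ℕ) (c : R) :
    B.normalize R (monomial d c) = monomial (B.normalForm d) c :=
  AddMonoidAlgebra.mapDomainLinearMap_single _ _ _

theorem monomial_mul_binomial (e : σ →₀ ℕ) (c : R) (i : ι) :
    monomial e c * B.binomial R i = monomial (e + B.lead i) c - monomial (e + B.tail i) c := by
  rw [binomial, mul_sub, monomial_mul, monomial_mul, mul_one]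

theorem monomial_add_lead_sub_mem (e : σ →₀ ℕ) (c : R) (i : ι) :
    monomial (e + B.lead i) c - monomial (e + B.tail i) c ∈ B.ideal R := by
  rw [← monomial_mul_binomial]
  exact Ideal.mul_mem_left _ _ (Ideal.subset_span ⟨i, rfl⟩)

theorem monomial_sub_monomial_normalForm_mem (d : σ →₀ ℕ) (c : R) :
    monomial d c - monomial (B.normalForm d) c ∈ B.ideal R := by
  rw [normalForm]
  split_ifs with h
  · have hstep := B.monomial_add_lead_sub_mem (d - B.lead h.choose) c h.choose
    rw [tsub_add_cancel_of_le h.choose_spec] at hstep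
    simpa using add_mem hstep
      (monomial_sub_monomial_normalForm_mem (d - B.lead h.choose + B.tail h.choose) c)
  · simp
termination_by WellFounded.wrap wellFounded_lt (m.toSyn d)
decreasing_by exact B.sub_lead_add_tail_lt h.choose_spec

theorem sub_normalize_mem (p : MvPolynomial σ R) : p - B.normalize R p ∈ B.ideal R := by
  induction p using MvPolynomial.induction_on' with
  | monomial d c => simpa [normalize_monomial] using B.monomial_sub_monomial_normalForm_mem d c
  | add p q hp hq => simpa [add_sub_add_comm] using add_mem hp hq

theorem normalize_mul_binomial (q : MvPolynomial σ R) (i : ι) :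
    B.normalize R (q * B.binomial R i) = 0 := by
  induction q using MvPolynomial.induction_on' with
  | monomial e c =>
    rw [monomial_mul_binomial, map_sub, normalize_monomial, normalize_monomial,
      normalForm_add_lead, sub_self]
  | add p q hp hq => rw [add_mul, map_add, hp, hq, add_zero]

theorem normalize_eq_zero_of_mem {p : MvPolynomial σ R} (hp : p ∈ B.ideal R) :
    B.normalize R p = 0 := by
  obtain ⟨c, rfl⟩ := Finsupp.mem_span_range_iff_exists_finsupp.mp hp
  simp [Finsupp.sum, normalize_mul_binomial]

theorem coeff_normalize {p : MvPolynomial σ R} {u : σ →₀ ℕ} (hu : ∀ i, ¬ B.lead i ≤ u)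
    (hp : ∀ d ∈ p.support, d ≼[m] u) : coeff u (B.normalize R p) = coeff u p := by
  classical
  change Finsupp.mapDomain B.normalForm (AddMonoidAlgebra.coeff p) u = coeff u p
  rw [Finsupp.mapDomain, Finsupp.sum_apply, Finsupp.sum, Finset.sum_eq_single u]
  · rw [B.normalForm_eq_self hu, Finsupp.single_eq_same]
    rfl
  · intro d hd hdu
    rw [Finsupp.single_apply, if_neg]
    intro h
    have hud := B.normalForm_le d
    rw [h] at hud
    exact hdu (m.toSyn.injective (le_antisymm (hp d hd) hud))
  · intro hu'
    rw [Finsupp.notMem_support_iff.mp hu', Finsupp.single_zero, Finsupp.zero_apply]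

theorem support_normalize_subset [DecidableEq σ] (p : MvPolynomial σ R) :
    (B.normalize R p).support ⊆ p.support.image B.normalForm :=
  Finsupp.mapDomain_support

theorem exists_lead_le_degree_of_mem {p : MvPolynomial σ R} (hp : p ∈ B.ideal R) (hp0 : p ≠ 0) :
    ∃ i, B.lead i ≤ m.degree p := by
  by_contra! hstd
  have h := B.coeff_normalize hstd fun d => m.le_degree
  rw [B.normalize_eq_zero_of_mem hp, coeff_zero] at h
  exact m.coeff_degree_ne_zero_iff.mpr hp0 h.symm

theorem isRadical_ideal [IsReduced R] (hsq : ∀ i x, B.lead i x ≤ 1) : (B.ideal R).IsRadical := by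
  classical
  rintro f ⟨n, hfn⟩
  set g := B.normalize R f
  have hfg : f - g ∈ B.ideal R := B.sub_normalize_mem f
  suffices g = 0 by simpa [this] using hfg
  by_contra hg
  have hgn : g ^ n ∈ B.ideal R := by
    simpa using sub_mem hfn (Ideal.mem_of_dvd _ (sub_dvd_pow_sub_pow f g n) hfg)
  obtain ⟨i, hi⟩ := B.exists_lead_le_degree_of_mem hgn fun h => hg (IsReduced.eq_zero g ⟨n, h⟩)
  rw [m.degree_pow] at hi
  obtain ⟨d, -, hd⟩ := Finset.mem_image.mp (B.support_normalize_subset f (m.degree_mem_support hg))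
  exact B.not_lead_le_normalForm d i (hd ▸ Finsupp.le_of_le_nsmul_of_le_one (hsq i) hi)

end CoprimeBinomials

end MonomialOrder

open MonomialOrder

def diagCorners (a : ℤ × ℤ) : Finset (ℤ × ℤ) := {a, a + (1, 1)}

def antiDiagCorners (a : ℤ × ℤ) : Finset (ℤ × ℤ) := {a + (0, 1), a + (1, 0)}

def leadCorners (o : ℤ × ℤ → Bool) (a : ℤ × ℤ) : Finset (ℤ × ℤ) :=
  if o a then diagCorners a else antiDiagCorners a

theorem disjoint_diagCorners {a b : ℤ × ℤ} (h : a ≠ b) (h₁ : b ≠ a + (1, 1))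
    (h₂ : a ≠ b + (1, 1)) : Disjoint (diagCorners a) (diagCorners b) := by
  obtain ⟨a₁, a₂⟩ := a
  obtain ⟨b₁, b₂⟩ := b
  simp only [diagCorners, Finset.disjoint_insert_left, Finset.disjoint_singleton_left,
    Finset.mem_insert, Finset.mem_singleton, Prod.mk_add_mk, ne_eq, Prod.mk.injEq] at *
  omega

theorem disjoint_antiDiagCorners {a b : ℤ × ℤ} (h : a ≠ b) (h₁ : b ≠ a + (1, -1))
    (h₂ : a ≠ b + (1, -1)) : Disjoint (antiDiagCorners a) (antiDiagCorners b) := by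
  obtain ⟨a₁, a₂⟩ := a
  obtain ⟨b₁, b₂⟩ := b
  simp only [antiDiagCorners, Finset.disjoint_insert_left, Finset.disjoint_singleton_left,
    Finset.mem_insert, Finset.mem_singleton, Prod.mk_add_mk, ne_eq, Prod.mk.injEq] at *
  omega

theorem disjoint_diagCorners_antiDiagCorners {a b : ℤ × ℤ} (h₁ : b ≠ a + (1, 0))
    (h₂ : b ≠ a + (0, 1)) (h₃ : a ≠ b + (1, 0)) (h₄ : a ≠ b + (0, 1)) :
    Disjoint (diagCorners a) (antiDiagCorners b) := by
  obtain ⟨a₁, a₂⟩ := a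
  obtain ⟨b₁, b₂⟩ := b
  simp only [diagCorners, antiDiagCorners, Finset.disjoint_insert_left,
    Finset.disjoint_singleton_left, Finset.mem_insert, Finset.mem_singleton, Prod.mk_add_mk,
    ne_eq, Prod.mk.injEq] at *
  omega

theorem pairwiseDisjoint_leadCorners_of_diagonal_pair {C : Finset (ℤ × ℤ)} {p t : ℤ × ℤ}
    (hC : ∀ x ∈ C, x ≠ t → x = p ∨ x = p + (1, 1))
    (ht : t = p + (1, -1) ∨ p = t + (1, -1) ∨ t = p + (2, 0) ∨ t = p + (0, 2)) :
    (C : Set (ℤ × ℤ)).PairwiseDisjoint (leadCorners fun x => decide (x = t)) := by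
  have hdiag : ∀ x, x = p ∨ x = p + (1, 1) →
      x ≠ t + (1, 0) ∧ x ≠ t + (0, 1) ∧ t ≠ x + (1, 0) ∧ t ≠ x + (0, 1) := by
    rintro ⟨x₁, x₂⟩ hx
    obtain ⟨p₁, p₂⟩ := p
    obtain ⟨t₁, t₂⟩ := t
    simp only [Prod.mk_add_mk, ne_eq, Prod.mk.injEq] at hx ht ⊢
    omega
  have hanti : ∀ x y, x = p ∨ x = p + (1, 1) → y = p ∨ y = p + (1, 1) →
      y ≠ x + (1, -1) ∧ x ≠ y + (1, -1) := by
    rintro ⟨x₁, x₂⟩ ⟨y₁, y₂⟩ hx hy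
    obtain ⟨p₁, p₂⟩ := p
    simp only [Prod.mk_add_mk, ne_eq, Prod.mk.injEq] at hx hy ⊢
    omega
  intro a ha b hb hab
  simp only [Function.onFun, leadCorners, decide_eq_true_eq]
  split_ifs with hat hbt hbt
  · exact absurd (hat.trans hbt.symm) hab
  · rw [hat]
    obtain ⟨h₁, h₂, h₃, h₄⟩ := hdiag b (hC b hb hbt)
    exact disjoint_diagCorners_antiDiagCorners h₁ h₂ h₃ h₄
  · rw [hbt]
    obtain ⟨h₁, h₂, h₃, h₄⟩ := hdiag a (hC a ha hat)
    exact (disjoint_diagCorners_antiDiagCorners h₁ h₂ h₃ h₄).symm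
  · obtain ⟨h₁, h₂⟩ := hanti a b (hC a ha hat) (hC b hb hbt)
    exact disjoint_antiDiagCorners hab h₁ h₂

theorem exists_pairwiseDisjoint_leadCorners {C : Finset (ℤ × ℤ)} (hC : C.card ≤ 3) :
    ∃ o : ℤ × ℤ → Bool, (C : Set (ℤ × ℤ)).PairwiseDisjoint (leadCorners o) := by
  by_cases! hdiag : ∀ p ∈ C, p + (1, 1) ∉ C
  · refine ⟨fun _ => true, fun a ha b hb hab => ?_⟩
    exact disjoint_diagCorners hab (fun h => hdiag a ha (h ▸ hb)) (fun h => hdiag b hb (h ▸ ha))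
  by_cases! hanti : ∀ r ∈ C, r + (1, -1) ∉ C
  · refine ⟨fun _ => false, fun a ha b hb hab => ?_⟩
    exact disjoint_antiDiagCorners hab (fun h => hanti a ha (h ▸ hb))
      (fun h => hanti b hb (h ▸ ha))
  -- Otherwise `C = {p, p + (1, 1), t}` with `t` anti-diagonally adjacent to `p` or `p + (1, 1)`,
  -- and only `t` gets its diagonal as leading term.
  obtain ⟨p, hp, hq⟩ := hdiag
  obtain ⟨r, hr, hs⟩ := hanti
  have hdist : ∀ x y : ℤ × ℤ, (x = p ∨ x = p + (1, 1)) → (y = p ∨ y = p + (1, 1)) →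
      y ≠ x + (1, -1) := by
    rintro ⟨x₁, x₂⟩ ⟨y₁, y₂⟩ hx hy
    obtain ⟨p₁, p₂⟩ := p
    simp only [Prod.mk_add_mk, ne_eq, Prod.mk.injEq] at hx hy ⊢
    omega
  obtain ⟨t, ht, htp, htq⟩ : ∃ t ∈ C, t ≠ p ∧ t ≠ p + (1, 1) := by
    by_contra! h
    exact hdist r _ (or_iff_not_imp_left.mpr (h r hr)) (or_iff_not_imp_left.mpr (h _ hs)) rfl
  have hCeq : {p, p + (1, 1), t} = C := by
    refine Finset.eq_of_subset_of_card_le (by simp [Finset.insert_subset_iff, hp, hq, ht]) ?_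
    rw [Finset.card_eq_three.mpr ⟨p, p + (1, 1), t, ?_, htp.symm, htq.symm, rfl⟩]
    · exact hC
    · simp
  simp only [← hCeq, Finset.mem_insert, Finset.mem_singleton] at hr hs
  refine ⟨_, pairwiseDisjoint_leadCorners_of_diagonal_pair (p := p) (t := t)
    (fun x hx hxt => ?_) ?_⟩
  · simp only [← hCeq, Finset.mem_insert, Finset.mem_singleton] at hx
    tauto
  obtain ⟨p₁, p₂⟩ := p
  obtain ⟨r₁, r₂⟩ := r
  obtain ⟨t₁, t₂⟩ := t
  simp only [Prod.mk_add_mk, ne_eq, Prod.mk.injEq] at hr hs htp htq ⊢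
  omega

/-- The south-west indicator of `x`, summed with signs `+, +, -, -` over the corners
`a, a + (1, 1), a + (0, 1), a + (1, 0)`, is the indicator of `x = a`; hence the mixed difference of
`cornerCount C o` over a cell `a ∈ C` is `±1` according to `o a`. -/
def cornerCount (C : Finset (ℤ × ℤ)) (o : ℤ × ℤ → Bool) (v : ℤ × ℤ) : ℕ :=
  ∑ x ∈ C, if (o x = true ↔ x.1 < v.1 ∧ x.2 < v.2) then 1 else 0

theorem cornerCount_mixed_difference {C : Finset (ℤ × ℤ)} (o : ℤ × ℤ → Bool) {a : ℤ × ℤ}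
    (ha : a ∈ C) :
    (cornerCount C o a + cornerCount C o (a + (1, 1)) : ℤ)
      - (cornerCount C o (a + (0, 1)) + cornerCount C o (a + (1, 0))) = if o a then 1 else -1 := by
  have hterm : ∀ x ∈ C,
      ((if (o x = true ↔ x.1 < a.1 ∧ x.2 < a.2) then 1 else 0 : ℤ)
        + (if (o x = true ↔ x.1 < a.1 + 1 ∧ x.2 < a.2 + 1) then 1 else 0))
      - ((if (o x = true ↔ x.1 < a.1 ∧ x.2 < a.2 + 1) then 1 else 0)
        + (if (o x = true ↔ x.1 < a.1 + 1 ∧ x.2 < a.2) then 1 else 0))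
      = if x = a then (if o x then 1 else -1) else 0 := by
    intro x _
    obtain ⟨x₁, x₂⟩ := x
    obtain ⟨a₁, a₂⟩ := a
    simp only [Prod.mk.injEq]
    cases o (x₁, x₂) <;> simp only [Bool.false_eq_true, false_iff, true_iff, if_true, if_false] <;>
      split_ifs <;> omega
  simp only [cornerCount, Nat.cast_sum, Nat.cast_ite, Nat.cast_one, Nat.cast_zero,
    ← Finset.sum_add_distrib, ← Finset.sum_sub_distrib, Prod.fst_add, Prod.snd_add, add_zero]
  rw [Finset.sum_congr rfl hterm, Finset.sum_ite_eq' C a, if_pos ha]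

section Cells

variable {C : Finset (ℤ × ℤ)}

def corner00 (i : C) : verts C := ⟨i.1, mem_verts i.2 (corner_mem00 i)⟩
def corner11 (i : C) : verts C := ⟨i.1 + (1, 1), mem_verts i.2 (corner_mem11 i)⟩
def corner01 (i : C) : verts C := ⟨i.1 + (0, 1), mem_verts i.2 (corner_mem01 i)⟩
def corner10 (i : C) : verts C := ⟨i.1 + (1, 0), mem_verts i.2 (corner_mem10 i)⟩

noncomputable def diagExp (i : C) : verts C →₀ ℕ :=
  Finsupp.single (corner00 i) 1 + Finsupp.single (corner11 i) 1

noncomputable def antiDiagExp (i : C) : verts C →₀ ℕ :=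
  Finsupp.single (corner01 i) 1 + Finsupp.single (corner10 i) 1

theorem corner00_ne_corner11 (i : C) : corner00 i ≠ corner11 i := by
  simp [corner00, corner11, Subtype.ext_iff, Prod.ext_iff]

theorem corner01_ne_corner10 (i : C) : corner01 i ≠ corner10 i := by
  simp [corner01, corner10, Subtype.ext_iff, Prod.ext_iff]

noncomputable def leadExp (o : ℤ × ℤ → Bool) (i : C) : verts C →₀ ℕ :=
  if o i then diagExp i else antiDiagExp i

noncomputable def tailExp (o : ℤ × ℤ → Bool) (i : C) : verts C →₀ ℕ :=
  if o i then antiDiagExp i else diagExp i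

theorem leadExp_apply_le_one (o : ℤ × ℤ → Bool) (i : C) (x : verts C) : leadExp o i x ≤ 1 := by
  unfold leadExp diagExp antiDiagExp
  split_ifs
  · exact Finsupp.single_add_single_apply_le_one (corner00_ne_corner11 i) x
  · exact Finsupp.single_add_single_apply_le_one (corner01_ne_corner10 i) x

theorem mem_leadCorners_of_mem_support {o : ℤ × ℤ → Bool} {i : C} {x : verts C}
    (hx : x ∈ (leadExp o i).support) : (x : ℤ × ℤ) ∈ leadCorners o i := by
  unfold leadExp diagExp antiDiagExp at hx
  unfold leadCorners diagCorners antiDiagCorners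
  split_ifs at hx ⊢ <;>
    rcases Finsupp.eq_or_eq_of_mem_support_single_add_single hx with rfl | rfl <;>
    simp [corner00, corner11, corner01, corner10]

noncomputable def cellWeight (C : Finset (ℤ × ℤ)) (o : ℤ × ℤ → Bool) : (verts C →₀ ℕ) →+ ℕ :=
  Finsupp.weight fun v : verts C => cornerCount C o v.1

theorem cellWeight_diagExp (o : ℤ × ℤ → Bool) (i : C) :
    cellWeight C o (diagExp i) = cornerCount C o i + cornerCount C o (i.1 + (1, 1)) := by
  simp only [cellWeight, diagExp, map_add, Finsupp.weight_single, smul_eq_mul, one_mul]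
  rfl

theorem cellWeight_antiDiagExp (o : ℤ × ℤ → Bool) (i : C) :
    cellWeight C o (antiDiagExp i) =
      cornerCount C o (i.1 + (0, 1)) + cornerCount C o (i.1 + (1, 0)) := by
  simp only [cellWeight, antiDiagExp, map_add, Finsupp.weight_single, smul_eq_mul, one_mul]
  rfl

theorem cellWeight_tailExp_lt_leadExp (o : ℤ × ℤ → Bool) (i : C) :
    cellWeight C o (tailExp o i) < cellWeight C o (leadExp o i) := by
  have h := cornerCount_mixed_difference o i.2
  unfold tailExp leadExp
  split_ifs with hoi <;> simp only [hoi, Bool.false_eq_true, if_true, if_false] at h <;>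
    simp only [cellWeight_diagExp, cellWeight_antiDiagExp] <;> omega

noncomputable def cellBinomials (o : ℤ × ℤ → Bool)
    (ho : (C : Set (ℤ × ℤ)).PairwiseDisjoint (leadCorners o)) (m : MonomialOrder (verts C)) :
    (m.weightThen (cellWeight C o)).CoprimeBinomials C where
  lead := leadExp o
  tail := tailExp o
  tail_lt_lead i := lt_weightThen_of_lt (cellWeight_tailExp_lt_leadExp o i)
  disjoint_lead i j hij := Finset.disjoint_left.mpr fun _ hxi hxj =>
    Finset.disjoint_left.mp (ho i.2 j.2 (Subtype.coe_injective.ne hij))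
      (mem_leadCorners_of_mem_support hxi) (mem_leadCorners_of_mem_support hxj)

noncomputable def adjMinor (R : Type*) [CommRing R] (i : C) : MvPolynomial (verts C) R :=
  X (corner00 i) * X (corner11 i) - X (corner01 i) * X (corner10 i)

theorem adjIdeal_eq_span_range_adjMinor (K : Type*) [Field K] :
    adjIdeal K C = Ideal.span (Set.range (adjMinor K)) := by
  unfold adjIdeal
  congr 1
  ext f
  simp [adjMinor, corner00, corner11, corner01, corner10, eq_comm]

theorem cellBinomials_binomial_eq_or_eq_neg {o : ℤ × ℤ → Bool}
    (ho : (C : Set (ℤ × ℤ)).PairwiseDisjoint (leadCorners o)) (m : MonomialOrder (verts C))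
    (R : Type*) [CommRing R] (i : C) :
    (cellBinomials o ho m).binomial R i = adjMinor R i ∨
      (cellBinomials o ho m).binomial R i = -adjMinor R i := by
  simp only [CoprimeBinomials.binomial, cellBinomials, leadExp, tailExp, diagExp, antiDiagExp,
    adjMinor]
  split_ifs
  · left
    simp only [monomial_single_add_single]
  · right
    simp only [monomial_single_add_single, neg_sub]

theorem isRadical_adjIdeal_of_pairwiseDisjoint (K : Type*) [Field K] {o : ℤ × ℤ → Bool}
    (ho : (C : Set (ℤ × ℤ)).PairwiseDisjoint (leadCorners o)) : (adjIdeal K C).IsRadical := by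
  obtain ⟨m⟩ := MonomialOrder.nonempty (verts C)
  rw [adjIdeal_eq_span_range_adjMinor,
    ← Ideal.span_range_eq_of_eq_or_eq_neg (cellBinomials_binomial_eq_or_eq_neg ho m K)]
  exact (cellBinomials o ho m).isRadical_ideal (leadExp_apply_le_one o)

end Cells

theorem stmt_17_general (C : Finset (ℤ × ℤ)) (hcard : C.card ≤ 3) :
    (adjIdeal ℚ C).radical = adjIdeal ℚ C := by
  obtain ⟨o, ho⟩ := exists_pairwiseDisjoint_leadCorners hcard
  exact (isRadical_adjIdeal_of_pairwiseDisjoint ℚ ho).radical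

/-- For a weakly connected collection of cells of rank at most 3,
`I_adj(𝒞)` over `ℚ` is radical. -/
theorem stmt_17 (C : Finset (ℤ × ℤ)) (hC : C.Nonempty) (hwc : WeaklyConnected C)
    (hcard : C.card ≤ 3) :
    (adjIdeal ℚ C).radical = adjIdeal ℚ C :=
  stmt_17_general C hcard
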